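/- Let A and B be adjacency matrices of connected undirected graphs on the same N vertices, let τ₁, τ₂ > 0, let x* satisfy the single-virus SIS fixed point equations for (A, τ₁) and y* the single-virus SIS fixed point equations for (B, τ₂), and let (x̂, ŷ) be a coexistence equilibrium for (A, B, τ₁, τ₂) that additionally satisfies x̂_i < x*_i·(1 − ŷ_i) and ŷ_i < y*_i·(1 − x̂_i) for every i. Then (1/N)·(Σ_i x̂_i + Σ_i ŷ_i) < 1 − 1/(τ₁·λ(A) + τ₂·λ(B) − 1). -/

import Mathlib

open Matrix Finset

/-- Spectral radius of a real matrix: supremum of absolute values of its complex eigenvalues. -/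
noncomputable def specRad {N : ℕ} (M : Matrix (Fin N) (Fin N) ℝ) : ℝ :=
  sSup ((fun z : ℂ => ‖z‖) '' spectrum ℂ (M.map Complex.ofReal))

/-- `A` is the adjacency matrix of a connected undirected graph:
symmetric, 0/1 entries, zero diagonal, and irreducible (connectivity). -/
def IsConnectedAdjMatrix {N : ℕ} (A : Matrix (Fin N) (Fin N) ℝ) : Prop :=
  A.IsSymm ∧ (∀ i j, A i j = 0 ∨ A i j = 1) ∧ (∀ i, A i i = 0) ∧
    (∀ i j, i ≠ j → ∃ k : ℕ, 0 < (A ^ k) i j)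

/-- `x` satisfies the single-virus SIS fixed point equations for `(A, τ)`. -/
def IsSISFixedPoint {N : ℕ} (A : Matrix (Fin N) (Fin N) ℝ) (τ : ℝ)
    (x : Fin N → ℝ) : Prop :=
  (∀ i, 0 < x i ∧ x i < 1) ∧ (∀ i, ∑ j, A i j * x j = x i / (τ * (1 - x i)))

/-- `(x, y)` is a coexistence equilibrium of the bi-SIS system for `(A, B, τ₁, τ₂)`. -/
def IsCoexistenceEq {N : ℕ} (A B : Matrix (Fin N) (Fin N) ℝ) (τ₁ τ₂ : ℝ)
    (x y : Fin N → ℝ) : Prop :=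
  (∀ i, 0 < x i) ∧ (∀ i, 0 < y i) ∧ (∀ i, x i + y i < 1) ∧
    (∀ i, ∑ j, A i j * x j = x i / (τ₁ * (1 - x i - y i))) ∧
    (∀ i, ∑ j, B i j * y j = y i / (τ₂ * (1 - x i - y i)))

/-!
For a single-virus fixed point `x` of `(A, τ)` the equations read `τ (A x)_i = x_i / (1 - x_i)`,
so `∑ x_i² / (1 - x_i) = τ xᵀ A x ≤ τ λ(A) ∑ x_i²`, and Chebyshev's sum inequality (`x_i²` and
`1 / (1 - x_i)` are similarly ordered) yields `∑ 1 / (1 - x_i) ≤ N τ λ(A)`.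

At the coexistence equilibrium, with `s = x̂ + ŷ`, one has
`1 / (1 - s_i) = 1 + τ₁ (A x̂)_i + τ₂ (B ŷ)_i`. The pointwise hypotheses give `x̂ < x*` and
`ŷ < y*`, and every row of `A` meets the support of `x*` (its row sum against `x*` is positive),
so `τ₁ (A x̂)_i < x*_i / (1 - x*_i)`, and likewise for `B`. Summing,
`∑ 1 / (1 - s_i) < N (τ₁ λ(A) + τ₂ λ(B) - 1)`, and the AM–HM inequality between the numbers
`1 - s_i` turns this into the bound on the mean of `s`.
-/

theorem Matrix.map_mem_spectrum_map {K L ι : Type*} [Field K] [Field L] [Fintype ι]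
    [DecidableEq ι] (f : K →+* L) {A : Matrix ι ι K} {r : K} (h : r ∈ spectrum K A) :
    f r ∈ spectrum L (A.map f) := by
  rw [mem_spectrum_iff_isRoot_charpoly] at h ⊢
  rw [charpoly_map]
  exact h.map

theorem Matrix.IsHermitian.dotProduct_mulVec_le {ι : Type*} [Fintype ι] [DecidableEq ι]
    {A : Matrix ι ι ℝ} (hA : A.IsHermitian) {r : ℝ} (hr : ∀ μ ∈ spectrum ℝ A, μ ≤ r)
    (x : ι → ℝ) : x ⬝ᵥ A *ᵥ x ≤ r * (x ⬝ᵥ x) := by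
  have hpsd : (algebraMap ℝ _ r - A).PosSemidef := by
    rw [posSemidef_iff_isHermitian_and_spectrum_nonneg, ← spectrum.singleton_sub_eq]
    refine ⟨(IsSelfAdjoint.algebraMap _ (IsSelfAdjoint.all r)).sub hA, ?_⟩
    rintro _ ⟨_, rfl, μ, hμ, rfl⟩
    simpa using hr μ hμ
  simpa [Algebra.algebraMap_eq_smul_one, sub_mulVec, smul_mulVec, dotProduct_sub,
    dotProduct_smul] using hpsd.dotProduct_mulVec_nonneg x

theorem Finset.sum_mul_lt_sum_mul_of_lt {ι : Type*} [Fintype ι] {a u v : ι → ℝ}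
    (ha : ∀ j, 0 ≤ a j) (huv : ∀ j, u j < v j) (hv : 0 < ∑ j, a j * v j) :
    ∑ j, a j * u j < ∑ j, a j * v j := by
  obtain ⟨j, -, hj⟩ := exists_lt_of_sum_lt (by simpa using hv : ∑ _j : ι, (0 : ℝ) < _)
  have haj : 0 < a j := (ha j).lt_of_ne (by rintro h; simp [← h] at hj)
  exact sum_lt_sum (fun j _ => mul_le_mul_of_nonneg_left (huv j).le (ha j))
    ⟨j, mem_univ j, mul_lt_mul_of_pos_left (huv j) haj⟩

theorem mean_lt_one_sub_inv_of_sum_one_div_one_sub_lt {ι : Type*} [Fintype ι] [Nonempty ι]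
    {s : ι → ℝ} (hs : ∀ i, s i < 1) {D : ℝ} (hD : ∑ i, 1 / (1 - s i) < Fintype.card ι * D) :
    1 / (Fintype.card ι : ℝ) * ∑ i, s i < 1 - 1 / D := by
  set n : ℝ := (Fintype.card ι : ℝ)
  have hn : 0 < n := by positivity
  have hgap : 0 < ∑ i, (1 - s i) := sum_pos (fun i _ => sub_pos.mpr (hs i)) univ_nonempty
  have hamhm : n ^ 2 / ∑ i, (1 - s i) ≤ ∑ i, 1 / (1 - s i) := by
    simpa [n] using sq_sum_div_le_sum_sq_div univ (fun _ => (1 : ℝ))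
      (fun i _ => sub_pos.mpr (hs i))
  have hD' : n / ∑ i, (1 - s i) < D := by
    refine lt_of_mul_lt_mul_left ?_ hn.le
    rw [← mul_div_assoc, ← sq]
    exact hamhm.trans_lt hD
  have hinv : 1 / D < (∑ i, (1 - s i)) / n := by
    simpa only [one_div_div] using one_div_lt_one_div_of_lt (div_pos hn hgap) hD'
  calc 1 / n * ∑ i, s i = 1 - (∑ i, (1 - s i)) / n := by
        simp only [sum_sub_distrib, sum_const, card_univ, nsmul_eq_mul, mul_one, n]
        field_simp
        ring
    _ < 1 - 1 / D := sub_lt_sub_left hinv 1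

theorem le_specRad_of_mem_spectrum {N : ℕ} {A : Matrix (Fin N) (Fin N) ℝ} {μ : ℝ}
    (hμ : μ ∈ spectrum ℝ A) : μ ≤ specRad A := by
  have hmem : (μ : ℂ) ∈ spectrum ℂ (A.map Complex.ofReal) :=
    Matrix.map_mem_spectrum_map Complex.ofRealHom hμ
  calc μ ≤ ‖(μ : ℂ)‖ := by simpa using le_abs_self μ
    _ ≤ specRad A := le_csSup ((finite_spectrum _).image _).bddAbove ⟨_, hmem, rfl⟩

theorem specRad_of_fin_zero (A : Matrix (Fin 0) (Fin 0) ℝ) : specRad A = 0 := by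
  simp [specRad]

theorem IsConnectedAdjMatrix.isHermitian {N : ℕ} {A : Matrix (Fin N) (Fin N) ℝ}
    (hA : IsConnectedAdjMatrix A) : A.IsHermitian :=
  isHermitian_iff_isSymm.mpr hA.1

theorem IsConnectedAdjMatrix.nonneg {N : ℕ} {A : Matrix (Fin N) (Fin N) ℝ}
    (hA : IsConnectedAdjMatrix A) (i j : Fin N) : 0 ≤ A i j := by
  rcases hA.2.1 i j with h | h <;> simp [h]

section SIS

variable {N : ℕ} {A B : Matrix (Fin N) (Fin N) ℝ} {τ τ₁ τ₂ : ℝ} {x y xs ys u : Fin N → ℝ}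

theorem IsSISFixedPoint.mul_mulVec_apply (hx : IsSISFixedPoint A τ x) (hτ : τ ≠ 0) (i : Fin N) :
    τ * (A *ᵥ x) i = x i / (1 - x i) := by
  rw [mulVec, dotProduct, hx.2 i, ← mul_div_assoc, mul_div_mul_left _ _ hτ]

theorem IsCoexistenceEq.mul_mulVec_apply_left (h : IsCoexistenceEq A B τ₁ τ₂ x y) (hτ : τ₁ ≠ 0)
    (i : Fin N) : τ₁ * (A *ᵥ x) i = x i / (1 - (x i + y i)) := by
  rw [mulVec, dotProduct, h.2.2.2.1 i, ← mul_div_assoc, mul_div_mul_left _ _ hτ, sub_sub]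

theorem IsCoexistenceEq.mul_mulVec_apply_right (h : IsCoexistenceEq A B τ₁ τ₂ x y) (hτ : τ₂ ≠ 0)
    (i : Fin N) : τ₂ * (B *ᵥ y) i = y i / (1 - (x i + y i)) := by
  rw [mulVec, dotProduct, h.2.2.2.2 i, ← mul_div_assoc, mul_div_mul_left _ _ hτ, sub_sub]

theorem IsSISFixedPoint.mul_mulVec_apply_lt (hx : IsSISFixedPoint A τ x) (hτ : 0 < τ)
    (hA : ∀ i j, 0 ≤ A i j) (hu : ∀ j, u j < x j) (i : Fin N) :
    τ * (A *ᵥ u) i < x i / (1 - x i) := by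
  rw [← hx.mul_mulVec_apply hτ.ne' i]
  refine mul_lt_mul_of_pos_left (sum_mul_lt_sum_mul_of_lt (hA i) hu ?_) hτ
  obtain ⟨hx₀, hx₁⟩ := hx.1 i
  exact (hx.2 i).symm ▸ div_pos hx₀ (mul_pos hτ (sub_pos.mpr hx₁))

theorem IsSISFixedPoint.sum_one_div_one_sub_le (hx : IsSISFixedPoint A τ x) (hτ : 0 < τ)
    (hA : A.IsHermitian) : ∑ i, 1 / (1 - x i) ≤ N * (τ * specRad A) := by
  obtain rfl | hN := N.eq_zero_or_pos
  · simp
  have hx₀ i : 0 < x i := (hx.1 i).1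
  have hx₁ i : 0 < 1 - x i := sub_pos.mpr (hx.1 i).2
  have hquad : ∑ i, x i ^ 2 * (1 / (1 - x i)) = τ * (x ⬝ᵥ A *ᵥ x) := by
    rw [dotProduct, mul_sum]
    refine sum_congr rfl fun i _ => ?_
    rw [mul_left_comm, hx.mul_mulVec_apply hτ.ne' i]
    ring
  have hmono : Monovary (fun i => x i ^ 2) (fun i => 1 / (1 - x i)) := fun i j hij => by
    have := (one_div_lt_one_div (hx₁ i) (hx₁ j)).mp hij
    exact pow_le_pow_left₀ (hx₀ i).le (by linarith) 2
  have hsq : 0 < ∑ i, x i ^ 2 :=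
    sum_pos (fun i _ => pow_pos (hx₀ i) 2) (univ_nonempty_iff.mpr ⟨⟨0, hN⟩⟩)
  refine le_of_mul_le_mul_left ?_ hsq
  calc (∑ i, x i ^ 2) * ∑ i, 1 / (1 - x i)
      ≤ N * ∑ i, x i ^ 2 * (1 / (1 - x i)) := by
        simpa using hmono.sum_mul_sum_le_card_mul_sum
    _ = N * (τ * (x ⬝ᵥ A *ᵥ x)) := by rw [hquad]
    _ ≤ N * (τ * (specRad A * (x ⬝ᵥ x))) := by
        gcongr
        exact hA.dotProduct_mulVec_le (fun μ hμ => le_specRad_of_mem_spectrum hμ) x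
    _ = (∑ i, x i ^ 2) * (N * (τ * specRad A)) := by
        simp only [dotProduct, sq]
        ring

theorem IsCoexistenceEq.one_div_one_sub_add_lt (hce : IsCoexistenceEq A B τ₁ τ₂ x y)
    (hτ₁ : 0 < τ₁) (hτ₂ : 0 < τ₂) (hA : ∀ i j, 0 ≤ A i j) (hB : ∀ i j, 0 ≤ B i j)
    (hxs : IsSISFixedPoint A τ₁ xs) (hys : IsSISFixedPoint B τ₂ ys)
    (hx : ∀ j, x j < xs j) (hy : ∀ j, y j < ys j) (i : Fin N) :
    1 / (1 - (x i + y i)) < 1 / (1 - xs i) + 1 / (1 - ys i) - 1 := by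
  have hltx := hxs.mul_mulVec_apply_lt hτ₁ hA hx i
  have hlty := hys.mul_mulVec_apply_lt hτ₂ hB hy i
  rw [hce.mul_mulVec_apply_left hτ₁.ne' i] at hltx
  rw [hce.mul_mulVec_apply_right hτ₂.ne' i] at hlty
  have hs : 1 - (x i + y i) ≠ 0 := (sub_pos.mpr (hce.2.2.1 i)).ne'
  have hxs₁ : 1 - xs i ≠ 0 := (sub_pos.mpr (hxs.1 i).2).ne'
  have hys₁ : 1 - ys i ≠ 0 := (sub_pos.mpr (hys.1 i).2).ne'
  calc 1 / (1 - (x i + y i)) = 1 + x i / (1 - (x i + y i)) + y i / (1 - (x i + y i)) := by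
        field_simp
        ring
    _ < 1 + xs i / (1 - xs i) + ys i / (1 - ys i) := by gcongr
    _ = 1 / (1 - xs i) + 1 / (1 - ys i) - 1 := by
        field_simp
        ring

end SIS

/-- Let `A` and `B` be adjacency matrices of connected undirected graphs on
the same `N` vertices, let `τ₁, τ₂ > 0`, let `x*` satisfy the single-virus SIS fixed point
equations for `(A, τ₁)` and `y*` those for `(B, τ₂)`, and let `(x̂, ŷ)` be a coexistence
equilibrium for `(A, B, τ₁, τ₂)` that additionally satisfies `x̂_i < x*_i·(1 − ŷ_i)` and
`ŷ_i < y*_i·(1 − x̂_i)` for every `i`. Then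
`(1/N)·(Σ_i x̂_i + Σ_i ŷ_i) < 1 − 1/(τ₁·λ(A) + τ₂·λ(B) − 1)`. -/
theorem coexistence_average_bound_of_pointwise {N : ℕ}
    (A B : Matrix (Fin N) (Fin N) ℝ) (hA : IsConnectedAdjMatrix A) (hB : IsConnectedAdjMatrix B)
    (τ₁ τ₂ : ℝ) (hτ₁ : 0 < τ₁) (hτ₂ : 0 < τ₂)
    (xstar ystar : Fin N → ℝ)
    (hxs : IsSISFixedPoint A τ₁ xstar) (hys : IsSISFixedPoint B τ₂ ystar)
    (xhat yhat : Fin N → ℝ)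
    (hce : IsCoexistenceEq A B τ₁ τ₂ xhat yhat)
    (hpx : ∀ i, xhat i < xstar i * (1 - yhat i))
    (hpy : ∀ i, yhat i < ystar i * (1 - xhat i)) :
    (1 / (N : ℝ)) * ((∑ i, xhat i) + ∑ i, yhat i) <
      1 - 1 / (τ₁ * specRad A + τ₂ * specRad B - 1) := by
  obtain rfl | hN := N.eq_zero_or_pos
  · norm_num [specRad_of_fin_zero]
  have : Nonempty (Fin N) := ⟨⟨0, hN⟩⟩
  have hx i : xhat i < xstar i :=
    (hpx i).trans_le (mul_le_of_le_one_right (hxs.1 i).1.le (by linarith [hce.2.1 i]))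
  have hy i : yhat i < ystar i :=
    (hpy i).trans_le (mul_le_of_le_one_right (hys.1 i).1.le (by linarith [hce.1 i]))
  have hsum : ∑ i, 1 / (1 - (xhat i + yhat i)) <
      Fintype.card (Fin N) * (τ₁ * specRad A + τ₂ * specRad B - 1) := by
    calc ∑ i, 1 / (1 - (xhat i + yhat i))
        < ∑ i, (1 / (1 - xstar i) + 1 / (1 - ystar i) - 1) :=
          sum_lt_sum_of_nonempty univ_nonempty fun i _ =>
            hce.one_div_one_sub_add_lt hτ₁ hτ₂ hA.nonneg hB.nonneg hxs hys hx hy i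
      _ = ∑ i, 1 / (1 - xstar i) + ∑ i, 1 / (1 - ystar i) - N := by
          simp [sum_add_distrib, sum_sub_distrib]
      _ ≤ N * (τ₁ * specRad A) + N * (τ₂ * specRad B) - N := by
          gcongr
          · exact hxs.sum_one_div_one_sub_le hτ₁ hA.isHermitian
          · exact hys.sum_one_div_one_sub_le hτ₂ hB.isHermitian
      _ = Fintype.card (Fin N) * (τ₁ * specRad A + τ₂ * specRad B - 1) := by
          rw [Fintype.card_fin]
          ring
  simpa [sum_add_distrib] using
    mean_lt_one_sub_inv_of_sum_one_div_one_sub_lt (fun i => hce.2.2.1 i) hsum
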